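/- Let κ₀ ∈ ℝ and κ₁ > 0 with (κ₀ + 1)/κ₁ ∈ [−1/4, 1/4]. Then the supremum of the set { τ(θ)^{θ−1} : θ ∈ (1/2, 1) } equals exp((16κ₀² − 8κ₀(κ₁ − 4) + (4 + κ₁)²)/(32κ₁)). -/
import Mathlib


/-- `r(θ) = 1 − κ₁(θ − 1/2)(θ − 1)`. -/
noncomputable def rfun (κ₁ θ : ℝ) : ℝ := 1 - κ₁ * (θ - 1/2) * (θ - 1)

/-- `τ(θ) = exp(1 + κ₀ − r(θ)/(2(1 − θ)))`. -/
noncomputable def tau (κ₀ κ₁ θ : ℝ) : ℝ :=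
  Real.exp (1 + κ₀ - rfun κ₁ θ / (2 * (1 - θ)))

/-- The constant `ϱ(κ₀,κ₁)` from formula (5.3) of the paper. -/
noncomputable def varrho (κ₀ κ₁ : ℝ) : ℝ :=
  if (κ₀ + 1) / κ₁ > 1/4 then Real.exp (1/2)
  else if (κ₀ + 1) / κ₁ < -(1/4) then Real.exp (-κ₀ / 2)
  else Real.exp ((16 * κ₀ ^ 2 - 8 * κ₀ * (κ₁ - 4) + (4 + κ₁) ^ 2) / (32 * κ₁))

/-- Third case of formula (5.3): if `(κ₀+1)/κ₁ ∈ [−1/4,1/4]` then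
`sup { τ(θ)^{θ−1} : θ ∈ (1/2,1) } = exp((16κ₀² − 8κ₀(κ₁−4) + (4+κ₁)²)/(32κ₁))`. -/
theorem sup_tau_rpow_case_three (κ₀ κ₁ : ℝ) (hκ₁ : 0 < κ₁)
    (hcase : (κ₀ + 1) / κ₁ ∈ Set.Icc (-(1/4) : ℝ) (1/4)) :
    sSup ((fun θ : ℝ => tau κ₀ κ₁ θ ^ (θ - 1)) '' Set.Ioo (1/2 : ℝ) 1) =
      Real.exp ((16 * κ₀ ^ 2 - 8 * κ₀ * (κ₁ - 4) + (4 + κ₁) ^ 2) / (32 * κ₁)) := by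
  set M : ℝ := (16 * κ₀ ^ 2 - 8 * κ₀ * (κ₁ - 4) + (4 + κ₁) ^ 2) / (32 * κ₁) with hM
  set g : ℝ → ℝ := fun θ => (1 + κ₀) * (θ - 1) + (1 - κ₁ * (θ - 1/2) * (θ - 1)) / 2
    with hg
  set θs : ℝ := 3/4 + (κ₀ + 1) / κ₁ with hθs
  have hκ₁' : κ₁ ≠ 0 := ne_of_gt hκ₁
  -- rewrite the function on the interval
  have him : ∀ θ ∈ Set.Ioo (1/2 : ℝ) 1, tau κ₀ κ₁ θ ^ (θ - 1) = Real.exp (g θ) := by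
    intro θ hθ
    have hθ1 : θ ≠ 1 := ne_of_lt hθ.2
    have h1θ : (1 : ℝ) - θ ≠ 0 := ne_of_gt (by linarith [hθ.2] : (0:ℝ) < 1 - θ)
    rw [tau, Real.rpow_def_of_pos (Real.exp_pos _), Real.log_exp]
    congr 1
    rw [rfun, hg]
    push_cast
    field_simp
    ring
  -- value at the critical point
  have hgθs : g θs = M := by
    rw [hg, hθs, hM]
    field_simp
    ring
  -- upper bound
  have hub : ∀ θ : ℝ, g θ ≤ M := by
    intro θ
    have key : M - g θ = (κ₁ * (θ - 3/4) - (κ₀ + 1)) ^ 2 / (2 * κ₁) := by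
      rw [hM, hg]
      field_simp
      ring
    have h0 : (0:ℝ) ≤ M - g θ := by
      rw [key]; positivity
    exact sub_nonneg.mp h0
  -- θ* lies in the closure of the interval
  have hθs_mem : θs ∈ Set.Icc (1/2 : ℝ) 1 := by
    constructor
    · rw [hθs]; linarith [hcase.1]
    · rw [hθs]; linarith [hcase.2]
  have hclos : θs ∈ closure (Set.Ioo (1/2 : ℝ) 1) := by
    rw [closure_Ioo (by norm_num : (1/2 : ℝ) ≠ 1)]
    exact hθs_mem
  have hne : (Set.Ioo (1/2 : ℝ) 1).Nonempty := ⟨3/4, by norm_num, by norm_num⟩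
  apply IsLUB.csSup_eq _ (hne.image _)
  constructor
  · rintro x ⟨θ, hθ, rfl⟩
    simp only
    rw [him θ hθ]
    exact Real.exp_le_exp.mpr (hub θ)
  · intro b hb
    have hnb : (nhdsWithin θs (Set.Ioo (1/2 : ℝ) 1)).NeBot :=
      mem_closure_iff_nhdsWithin_neBot.mp hclos
    have htend : Filter.Tendsto (fun θ => Real.exp (g θ))
        (nhdsWithin θs (Set.Ioo (1/2 : ℝ) 1)) (nhds (Real.exp (g θs))) := by
      apply Filter.Tendsto.mono_left _ nhdsWithin_le_nhds
      exact (Real.continuous_exp.comp (by fun_prop : Continuous g)).continuousAt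
    have hev : ∀ᶠ θ in nhdsWithin θs (Set.Ioo (1/2 : ℝ) 1),
        Real.exp (g θ) ≤ b := by
      filter_upwards [self_mem_nhdsWithin] with θ hθ
      rw [← him θ hθ]
      exact hb ⟨θ, hθ, rfl⟩
    have := le_of_tendsto htend hev
    rwa [hgθs] at this
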